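/- arXiv:2003.13134 — 4 statements merged into one kernel-verified Lean document; each statement's English description precedes it below -/
import Mathlib

section
/- Let P be a partition of a set X, let Q ⊆ P be a three-element subfamily, and let σ be a weak selection for P such that Q is σ-circular (i.e., Q = {Q,R,S} with Q <_σ R <_σ S <_σ Q) and, for every P ∈ P with P ∉ Q, either P <_σ Q' for all Q' ∈ Q or Q' <_σ P for all Q' ∈ Q. Then for any choice of weak selections h_P for each P ∈ P, the following sets are open in the selection topology T_{σ*h} on X: the set ⋃{P ∈ P : P <_σ Q' for all Q' ∈ Q}, every member of Q, and the set ⋃{P ∈ P : Q' <_σ P for all Q' ∈ Q}. -/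
open Topology

/-- A weak selection for `X`: a choice function on (unordered) pairs,
encoded as a symmetric map `X → X → X` picking one of its two arguments. -/
structure WeakSelection (X : Type*) where
  toFun : X → X → X
  mem_pair : ∀ x y, toFun x y = x ∨ toFun x y = y
  comm : ∀ x y, toFun x y = toFun y x

namespace WeakSelection

variable {X : Type*}

/-- `x ≤_σ y` iff `σ {x, y} = x`. -/
def le (σ : WeakSelection X) (x y : X) : Prop := σ.toFun x y = x

/-- `x <_σ y` iff `x ≤_σ y` and `x ≠ y`. -/
def lt (σ : WeakSelection X) (x y : X) : Prop := σ.le x y ∧ x ≠ y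

/-- The selection topology `T_σ`, generated by the `≤_σ`-open intervals. -/
def selTop (σ : WeakSelection X) : TopologicalSpace X :=
  TopologicalSpace.generateFrom
    {s : Set X | ∃ a : X, s = {y | σ.lt y a} ∨ s = {y | σ.lt a y}}

/-- Continuity of a weak selection on a topological space. -/
def Continuous [TopologicalSpace X] (σ : WeakSelection X) : Prop :=
  ∀ x y : X, σ.lt x y → ∃ U V : Set X, IsOpen U ∧ IsOpen V ∧ x ∈ U ∧ y ∈ V ∧
    ∀ s ∈ U, ∀ t ∈ V, σ.lt s t

end WeakSelection

/-- `A <_g B` for subsets: `a <_g b` for all `a ∈ A`, `b ∈ B`. -/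
def setLT {X : Type*} (g : WeakSelection X) (A B : Set X) : Prop :=
  ∀ a ∈ A, ∀ b ∈ B, g.lt a b

/-- `g` is the `P`-invariant weak selection `σ * h` determined by a weak
selection `σ` for the partition `P` (with block map `blk`) and weak selections
`h p` for each block `p ∈ P`: on points of distinct blocks `g` is governed by
`σ`, and within a block `p` it agrees with `h p`. -/
def IsStar {X : Type*} (P : Set (Set X)) (blk : X → Set X) (hblk : ∀ x, blk x ∈ P)
    (σ : WeakSelection ↥P) (h : ∀ p : ↥P, WeakSelection ↥(p : Set X))
    (g : WeakSelection X) : Prop :=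
  (∀ x y : X, blk x ≠ blk y →
      (g.lt x y ↔ σ.lt ⟨blk x, hblk x⟩ ⟨blk y, hblk y⟩)) ∧
  (∀ (p : ↥P) (x y : ↥(p : Set X)), blk ↑x = ↑p → blk ↑y = ↑p →
      g.toFun ↑x ↑y = ↑((h p).toFun x y))

/-!
Pick points `x ∈ A`, `y ∈ B`, `z ∈ C`. Since `σ * h` compares points of different blocks as `σ`
compares the blocks, circularity of `{A, B, C}` together with the dichotomy for the other blocks
identifies each of the sets with an intersection of open rays of `σ * h`: the union of the blocks
below `Q` is `(←, x) ∩ (←, y) ∩ (←, z)`, the block `A` is `(z, →) ∩ (←, y)` (and cyclically for `B`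
and `C`), and the union of the blocks above `Q` is `(x, →) ∩ (y, →) ∩ (z, →)`.
-/

namespace WeakSelection

variable {X : Type*}

theorem lt_asymm {σ : WeakSelection X} {x y : X} (hxy : σ.lt x y) : ¬σ.lt y x :=
  fun hyx => hxy.2 (hxy.1.symm.trans ((σ.comm x y).trans hyx.1))

theorem isOpen_setOf_lt (σ : WeakSelection X) (x : X) : IsOpen[σ.selTop] {y | σ.lt y x} :=
  .basic _ ⟨x, .inl rfl⟩

theorem isOpen_setOf_gt (σ : WeakSelection X) (x : X) : IsOpen[σ.selTop] {y | σ.lt x y} :=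
  .basic _ ⟨x, .inr rfl⟩

def IsCircular (σ : WeakSelection X) (a b c : X) : Prop :=
  σ.lt a b ∧ σ.lt b c ∧ σ.lt c a

theorem IsCircular.rotate {σ : WeakSelection X} {a b c : X} (h : σ.IsCircular a b c) :
    σ.IsCircular b c a :=
  ⟨h.2.1, h.2.2, h.1⟩

def AgreesAcrossFibers {ι : Type*} (g : WeakSelection X) (σ : WeakSelection ι) (π : X → ι) :
    Prop :=
  ∀ x y, π x ≠ π y → (g.lt x y ↔ σ.lt (π x) (π y))

end WeakSelection

open WeakSelection

section CircularTriple

variable {ι : Type*} {σ : WeakSelection ι} {Q : Set ι} {a b c j : ι}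

theorem insert_pair_rotate (a b c : ι) : ({a, b, c} : Set ι) = {b, c, a} := by
  rw [Set.insert_comm, Set.pair_comm]

theorem forall_lt_of_forall_not_gt (hcirc : σ.IsCircular a b c) (hQ : Q = {a, b, c})
    (hdec : ∀ j ∉ Q, (∀ q ∈ Q, σ.lt j q) ∨ (∀ q ∈ Q, σ.lt q j))
    (hj : ∀ q ∈ Q, ¬σ.lt q j) : ∀ q ∈ Q, σ.lt j q := by
  subst hQ
  have hjQ : j ∉ ({a, b, c} : Set ι) := by
    rintro (rfl | rfl | rfl)
    exacts [hj c (by simp) hcirc.2.2, hj a (by simp) hcirc.1, hj b (by simp) hcirc.2.1]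
  exact (hdec j hjQ).resolve_right fun h => hj a (by simp) (h a (by simp))

theorem forall_gt_of_forall_not_lt (hcirc : σ.IsCircular a b c) (hQ : Q = {a, b, c})
    (hdec : ∀ j ∉ Q, (∀ q ∈ Q, σ.lt j q) ∨ (∀ q ∈ Q, σ.lt q j))
    (hj : ∀ q ∈ Q, ¬σ.lt j q) : ∀ q ∈ Q, σ.lt q j := by
  subst hQ
  have hjQ : j ∉ ({a, b, c} : Set ι) := by
    rintro (rfl | rfl | rfl)
    exacts [hj b (by simp) hcirc.1, hj c (by simp) hcirc.2.1, hj a (by simp) hcirc.2.2]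
  exact (hdec j hjQ).resolve_left fun h => hj a (by simp) (h a (by simp))

theorem eq_of_not_lt_of_not_gt (hcirc : σ.IsCircular a b c) (hQ : Q = {a, b, c})
    (hdec : ∀ j ∉ Q, (∀ q ∈ Q, σ.lt j q) ∨ (∀ q ∈ Q, σ.lt q j))
    (hc : ¬σ.lt j c) (hb : ¬σ.lt b j) : j = a := by
  subst hQ
  by_contra hja
  have hjQ : j ∉ ({a, b, c} : Set ι) := by
    rintro (rfl | rfl | rfl)
    exacts [hja rfl, hc hcirc.2.1, hb hcirc.2.1]
  rcases hdec j hjQ with h | h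
  exacts [hc (h c (by simp)), hb (h b (by simp))]

end CircularTriple

namespace WeakSelection.AgreesAcrossFibers

variable {X ι : Type*} {g : WeakSelection X} {σ : WeakSelection ι} {π : X → ι} {Q : Set ι}
  {x y z : X}

theorem lt_of_lt_map (hg : g.AgreesAcrossFibers σ π) (h : σ.lt (π x) (π y)) : g.lt x y :=
  (hg x y h.2).mpr h

theorem not_lt_map_of_lt (hg : g.AgreesAcrossFibers σ π) (h : g.lt x y) :
    ¬σ.lt (π y) (π x) :=
  fun h' => lt_asymm h (hg.lt_of_lt_map h')

theorem preimage_setOf_forall_lt_eq (hg : g.AgreesAcrossFibers σ π)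
    (hcirc : σ.IsCircular (π x) (π y) (π z)) (hQ : Q = {π x, π y, π z})
    (hdec : ∀ j ∉ Q, (∀ q ∈ Q, σ.lt j q) ∨ (∀ q ∈ Q, σ.lt q j)) :
    π ⁻¹' {j | ∀ q ∈ Q, σ.lt j q} = {w | g.lt w x} ∩ {w | g.lt w y} ∩ {w | g.lt w z} := by
  ext w
  constructor
  · intro (hlt : ∀ q ∈ Q, σ.lt (π w) q)
    subst hQ
    exact ⟨⟨hg.lt_of_lt_map (hlt _ (by simp)), hg.lt_of_lt_map (hlt _ (by simp))⟩,
      hg.lt_of_lt_map (hlt _ (by simp))⟩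
  · rintro ⟨⟨hx, hy⟩, hz⟩
    refine forall_lt_of_forall_not_gt hcirc hQ hdec ?_
    rw [hQ]
    rintro q (rfl | rfl | rfl)
    exacts [hg.not_lt_map_of_lt hx, hg.not_lt_map_of_lt hy, hg.not_lt_map_of_lt hz]

theorem preimage_setOf_forall_gt_eq (hg : g.AgreesAcrossFibers σ π)
    (hcirc : σ.IsCircular (π x) (π y) (π z)) (hQ : Q = {π x, π y, π z})
    (hdec : ∀ j ∉ Q, (∀ q ∈ Q, σ.lt j q) ∨ (∀ q ∈ Q, σ.lt q j)) :
    π ⁻¹' {j | ∀ q ∈ Q, σ.lt q j} = {w | g.lt x w} ∩ {w | g.lt y w} ∩ {w | g.lt z w} := by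
  ext w
  constructor
  · intro (hgt : ∀ q ∈ Q, σ.lt q (π w))
    subst hQ
    exact ⟨⟨hg.lt_of_lt_map (hgt _ (by simp)), hg.lt_of_lt_map (hgt _ (by simp))⟩,
      hg.lt_of_lt_map (hgt _ (by simp))⟩
  · rintro ⟨⟨hx, hy⟩, hz⟩
    refine forall_gt_of_forall_not_lt hcirc hQ hdec ?_
    rw [hQ]
    rintro q (rfl | rfl | rfl)
    exacts [hg.not_lt_map_of_lt hx, hg.not_lt_map_of_lt hy, hg.not_lt_map_of_lt hz]

theorem preimage_singleton_eq (hg : g.AgreesAcrossFibers σ π)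
    (hcirc : σ.IsCircular (π x) (π y) (π z)) (hQ : Q = {π x, π y, π z})
    (hdec : ∀ j ∉ Q, (∀ q ∈ Q, σ.lt j q) ∨ (∀ q ∈ Q, σ.lt q j)) :
    π ⁻¹' {π x} = {w | g.lt z w} ∩ {w | g.lt w y} := by
  ext w
  constructor
  · intro (hw : π w = π x)
    exact ⟨hg.lt_of_lt_map (hw ▸ hcirc.2.2), hg.lt_of_lt_map (hw ▸ hcirc.1)⟩
  · rintro ⟨hz, hy⟩
    exact eq_of_not_lt_of_not_gt hcirc hQ hdec (hg.not_lt_map_of_lt hz) (hg.not_lt_map_of_lt hy)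

theorem isOpen_preimage (hg : g.AgreesAcrossFibers σ π)
    (hcirc : σ.IsCircular (π x) (π y) (π z)) (hQ : Q = {π x, π y, π z})
    (hdec : ∀ j ∉ Q, (∀ q ∈ Q, σ.lt j q) ∨ (∀ q ∈ Q, σ.lt q j)) :
    IsOpen[g.selTop] (π ⁻¹' {j | ∀ q ∈ Q, σ.lt j q}) ∧
    (∀ q ∈ Q, IsOpen[g.selTop] (π ⁻¹' {q})) ∧
    IsOpen[g.selTop] (π ⁻¹' {j | ∀ q ∈ Q, σ.lt q j}) := by
  let _ := g.selTop
  refine ⟨?_, ?_, ?_⟩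
  · rw [hg.preimage_setOf_forall_lt_eq hcirc hQ hdec]
    exact ((g.isOpen_setOf_lt x).inter (g.isOpen_setOf_lt y)).inter (g.isOpen_setOf_lt z)
  · have hQ' := hQ.trans (insert_pair_rotate _ _ _)
    have hQ'' := hQ'.trans (insert_pair_rotate _ _ _)
    rw [hQ]
    rintro q (rfl | rfl | rfl)
    · rw [hg.preimage_singleton_eq hcirc hQ hdec]
      exact (g.isOpen_setOf_gt z).inter (g.isOpen_setOf_lt y)
    · rw [hg.preimage_singleton_eq hcirc.rotate hQ' hdec]
      exact (g.isOpen_setOf_gt x).inter (g.isOpen_setOf_lt z)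
    · rw [hg.preimage_singleton_eq hcirc.rotate.rotate hQ'' hdec]
      exact (g.isOpen_setOf_gt y).inter (g.isOpen_setOf_lt x)
  · rw [hg.preimage_setOf_forall_gt_eq hcirc hQ hdec]
    exact ((g.isOpen_setOf_gt x).inter (g.isOpen_setOf_gt y)).inter (g.isOpen_setOf_gt z)

end WeakSelection.AgreesAcrossFibers

theorem sUnion_setOf_eq_preimage {X : Type*} {P : Set (Set X)} {π : X → ↥P}
    (hπ : ∀ x (p : ↥P), x ∈ (p : Set X) ↔ π x = p) (R : ↥P → Prop) :
    ⋃₀ {p | ∃ hp : p ∈ P, R ⟨p, hp⟩} = π ⁻¹' {j | R j} := by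
  ext x
  constructor
  · rintro ⟨p, ⟨hp, hR⟩, hx⟩
    rwa [Set.mem_preimage, (hπ x ⟨p, hp⟩).1 hx]
  · intro hx
    exact ⟨π x, ⟨(π x).2, hx⟩, (hπ x (π x)).2 rfl⟩

theorem stmt1_general {X : Type*} (P : Set (Set X)) (blk : X → Set X)
    (hmem : ∀ x : X, x ∈ blk x) (hblk : ∀ x, blk x ∈ P)
    (huniq : ∀ x : X, ∀ p ∈ P, x ∈ p → p = blk x)
    (hne : ∀ p ∈ P, Set.Nonempty p)
    (Q : Set (Set X)) (hQP : Q ⊆ P)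
    (A B C : Set X) (hA : A ∈ P) (hB : B ∈ P) (hC : C ∈ P)
    (hQeq : Q = {A, B, C})
    (σ : WeakSelection ↥P)
    (hcirc : σ.lt ⟨A, hA⟩ ⟨B, hB⟩ ∧ σ.lt ⟨B, hB⟩ ⟨C, hC⟩ ∧ σ.lt ⟨C, hC⟩ ⟨A, hA⟩)
    (hdec : ∀ p (hp : p ∈ P), p ∉ Q →
      (∀ q (hq : q ∈ Q), σ.lt ⟨p, hp⟩ ⟨q, hQP hq⟩) ∨
      (∀ q (hq : q ∈ Q), σ.lt ⟨q, hQP hq⟩ ⟨p, hp⟩))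
    (h : ∀ p : ↥P, WeakSelection ↥(p : Set X))
    (g : WeakSelection X) (hg : IsStar P blk hblk σ h g) :
    IsOpen[g.selTop]
      (⋃₀ {p | ∃ hp : p ∈ P, ∀ q (hq : q ∈ Q), σ.lt ⟨p, hp⟩ ⟨q, hQP hq⟩}) ∧
    (∀ q ∈ Q, IsOpen[g.selTop] q) ∧
    IsOpen[g.selTop]
      (⋃₀ {p | ∃ hp : p ∈ P, ∀ q (hq : q ∈ Q), σ.lt ⟨q, hQP hq⟩ ⟨p, hp⟩}) := by
  let π : X → ↥P := fun x => ⟨blk x, hblk x⟩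
  have hfib : ∀ x (p : ↥P), x ∈ (p : Set X) ↔ π x = p := fun x p =>
    ⟨fun hx => Subtype.ext (huniq x p p.2 hx).symm, fun hxp => hxp ▸ hmem x⟩
  have hπ : g.AgreesAcrossFibers σ π := fun x y hxy => hg.1 x y fun h => hxy (Subtype.ext h)
  obtain ⟨a, ha⟩ := hne A hA
  obtain ⟨b, hb⟩ := hne B hB
  obtain ⟨c, hc⟩ := hne C hC
  rw [hfib a ⟨A, hA⟩] at ha
  rw [hfib b ⟨B, hB⟩] at hb
  rw [hfib c ⟨C, hC⟩] at hc
  have hQ : Subtype.val ⁻¹' Q = {π a, π b, π c} := by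
    ext j
    simp [hQeq, ha, hb, hc, Subtype.ext_iff]
  have hsets (R : ↥P → ↥P → Prop) :
      {j | ∀ q (hq : q ∈ Q), R j ⟨q, hQP hq⟩} = {j | ∀ q ∈ Subtype.val ⁻¹' Q, R j q} :=
    Set.ext fun _ => ⟨fun hR q hq => hR q hq, fun hR q hq => hR ⟨q, hQP hq⟩ hq⟩
  obtain ⟨hlow, hmid, hhigh⟩ := hπ.isOpen_preimage (ha ▸ hb ▸ hc ▸ hcirc) hQ
    fun j hj => (hdec j j.2 hj).imp (fun hR q hq => hR q hq) (fun hR q hq => hR q hq)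
  refine ⟨?_, fun q hq => ?_, ?_⟩
  · rwa [sUnion_setOf_eq_preimage hfib fun j => ∀ q (hq : q ∈ Q), σ.lt j ⟨q, hQP hq⟩,
      hsets σ.lt]
  · simpa only [Set.preimage, Set.mem_singleton_iff, ← hfib, Set.ofPred_mem_eq] using
      hmid ⟨q, hQP hq⟩ hq
  · rwa [sUnion_setOf_eq_preimage hfib fun j => ∀ q (hq : q ∈ Q), σ.lt ⟨q, hQP hq⟩ j,
      hsets fun j q => σ.lt q j]

/-- Proposition 2.2: if `Q ⊆ P` is a `σ`-circular triple and every other member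
of `P` lies entirely `σ`-below or `σ`-above `Q`, then for any choice of weak
selections `h p` on the blocks, the union of the blocks `σ`-below `Q`, each
member of `Q`, and the union of the blocks `σ`-above `Q` are open in the
selection topology of `σ * h`. -/
theorem stmt1 {X : Type*} (P : Set (Set X)) (blk : X → Set X)
    (hmem : ∀ x : X, x ∈ blk x) (hblk : ∀ x, blk x ∈ P)
    (huniq : ∀ x : X, ∀ p ∈ P, x ∈ p → p = blk x)
    (hne : ∀ p ∈ P, Set.Nonempty p)
    (Q : Set (Set X)) (hQP : Q ⊆ P)
    (A B C : Set X) (hA : A ∈ P) (hB : B ∈ P) (hC : C ∈ P)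
    (hQeq : Q = {A, B, C}) (hAB : A ≠ B) (hAC : A ≠ C) (hBC : B ≠ C)
    (σ : WeakSelection ↥P)
    (hcirc : σ.lt ⟨A, hA⟩ ⟨B, hB⟩ ∧ σ.lt ⟨B, hB⟩ ⟨C, hC⟩ ∧ σ.lt ⟨C, hC⟩ ⟨A, hA⟩)
    (hdec : ∀ p (hp : p ∈ P), p ∉ Q →
      (∀ q (hq : q ∈ Q), σ.lt ⟨p, hp⟩ ⟨q, hQP hq⟩) ∨
      (∀ q (hq : q ∈ Q), σ.lt ⟨q, hQP hq⟩ ⟨p, hp⟩))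
    (h : ∀ p : ↥P, WeakSelection ↥(p : Set X))
    (g : WeakSelection X) (hg : IsStar P blk hblk σ h g) :
    IsOpen[g.selTop]
      (⋃₀ {p | ∃ hp : p ∈ P, ∀ q (hq : q ∈ Q), σ.lt ⟨p, hp⟩ ⟨q, hQP hq⟩}) ∧
    (∀ q ∈ Q, IsOpen[g.selTop] q) ∧
    IsOpen[g.selTop]
      (⋃₀ {p | ∃ hp : p ∈ P, ∀ q (hq : q ∈ Q), σ.lt ⟨q, hQP hq⟩ ⟨p, hp⟩}) :=
  stmt1_general P blk hmem hblk huniq hne Q hQP A B C hA hB hC hQeq σ hcirc hdec h g hg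
end

section
/- Let (X,≤) be a suborderable Hausdorff space with compatible linear order ≤. Then ≤ induces a linear order on the set C[X] of connected components of X (declaring C < S iff c < s for all c ∈ C, s ∈ S, for distinct components C, S), and the quotient space C[X] is suborderable with respect to this induced order: the open-interval topology of the induced order is coarser than the quotient topology on C[X], and C[X] has a base of convex sets with respect to the induced order. -/
/-!
A point outside a preconnected set splits it by the two open rays it determines, so connected
components are convex; hence distinct components lie entirely on one side of each other, and
comparing components through arbitrary representatives is a linear order that does not depend on
the choice. The preimage of the ray below `[a]` is `Iio a` minus the closed component of `a`, so
rays are open. For a convex base, take the largest convex piece `ordConnectedComponent U A` of an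
open `U ∋ A`: the image of a convex neighbourhood of a point of its preimage is again convex, so
it stays inside this piece.
-/

open Topology Set Function

section OpenRays

variable {X : Type*} [LinearOrder X] [TopologicalSpace X]

theorem IsPreconnected.ordConnected_of_isOpen_rays (hIio : ∀ a : X, IsOpen (Iio a))
    (hIoi : ∀ a : X, IsOpen (Ioi a)) {s : Set X} (hs : IsPreconnected s) : s.OrdConnected := by
  refine ⟨fun a ha b hb z hz => by_contra fun hzs => ?_⟩
  have hcover : s ⊆ Iio z ∪ Ioi z := fun w hw => lt_or_gt_of_ne (ne_of_mem_of_not_mem hw hzs)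
  obtain ⟨w, -, hwz, hzw⟩ := hs _ _ (hIio z) (hIoi z) hcover
    ⟨a, ha, hz.1.lt_of_ne (ne_of_mem_of_not_mem ha hzs)⟩
    ⟨b, hb, hz.2.lt_of_ne' (ne_of_mem_of_not_mem hb hzs)⟩
  exact lt_asymm hwz hzw

theorem lt_of_mem_connectedComponent_of_lt (hIio : ∀ a : X, IsOpen (Iio a))
    (hIoi : ∀ a : X, IsOpen (Ioi a)) {a b a' b' : X}
    (hne : connectedComponent a ≠ connectedComponent b) (hab : a < b)
    (ha' : a' ∈ connectedComponent a) (hb' : b' ∈ connectedComponent b) : a' < b' := by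
  have hconv (x : X) : (connectedComponent x).OrdConnected :=
    isPreconnected_connectedComponent.ordConnected_of_isOpen_rays hIio hIoi
  refine lt_of_not_ge fun hba' => hne ?_
  rcases le_total a b' with hab' | hb'a
  · rw [connectedComponent_eq hb', connectedComponent_eq
      ((hconv a).out mem_connectedComponent ha' ⟨hab', hba'⟩)]
  · exact (connectedComponent_eq
      ((hconv b).out hb' mem_connectedComponent ⟨hb'a, hab.le⟩)).symm

end OpenRays

namespace ConnectedComponents

variable {X : Type*} [TopologicalSpace X]

theorem surjInv_mk_mem (x : X) : surjInv surjective_coe (mk x) ∈ connectedComponent x :=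
  coe_eq_coe'.1 (surjInv_eq surjective_coe (mk x))

variable [LinearOrder X]

-- Not a global instance: it is the natural order only when open rays are open.
noncomputable abbrev linearOrder : LinearOrder (ConnectedComponents X) :=
  LinearOrder.lift' (surjInv surjective_coe) (injective_surjInv _)

attribute [local instance] linearOrder

theorem mk_lt_mk_iff (hIio : ∀ a : X, IsOpen (Iio a)) (hIoi : ∀ a : X, IsOpen (Ioi a))
    {x y : X} (hne : mk x ≠ mk y) :
    mk x < mk y ↔ ∀ c ∈ connectedComponent x, ∀ s ∈ connectedComponent y, c < s := by
  have hrep (z : X) : connectedComponent (surjInv surjective_coe (mk z)) = connectedComponent z :=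
    (connectedComponent_eq (surjInv_mk_mem z)).symm
  refine ⟨fun h c hc s hs => ?_, fun h => h _ (surjInv_mk_mem x) _ (surjInv_mk_mem y)⟩
  refine lt_of_mem_connectedComponent_of_lt hIio hIoi ?_ h ?_ ?_ <;>
    simpa only [hrep, ← coe_ne_coe]

theorem mk_lt_mk_of_lt (hIio : ∀ a : X, IsOpen (Iio a))
    (hIoi : ∀ a : X, IsOpen (Ioi a)) {x y : X} (hne : mk x ≠ mk y) (h : x < y) : mk x < mk y :=
  (mk_lt_mk_iff hIio hIoi hne).2 fun _ hc _ hs =>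
    lt_of_mem_connectedComponent_of_lt hIio hIoi (coe_ne_coe.1 hne) h hc hs

theorem lt_of_mk_lt_mk (hIio : ∀ a : X, IsOpen (Iio a))
    (hIoi : ∀ a : X, IsOpen (Ioi a)) {x y : X} (h : mk x < mk y) : x < y :=
  (mk_lt_mk_iff hIio hIoi h.ne).1 h x mem_connectedComponent y mem_connectedComponent

theorem preimage_mk_Iio (hIio : ∀ a : X, IsOpen (Iio a))
    (hIoi : ∀ a : X, IsOpen (Ioi a)) (a : X) :
    mk ⁻¹' Iio (mk a) = Iio a \ connectedComponent a := by
  ext x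
  exact ⟨fun (h : mk x < mk a) => ⟨lt_of_mk_lt_mk hIio hIoi h, coe_eq_coe'.not.1 h.ne⟩,
    fun h => mk_lt_mk_of_lt hIio hIoi (coe_eq_coe'.not.2 h.2) h.1⟩

theorem preimage_mk_Ioi (hIio : ∀ a : X, IsOpen (Iio a))
    (hIoi : ∀ a : X, IsOpen (Ioi a)) (a : X) :
    mk ⁻¹' Ioi (mk a) = Ioi a \ connectedComponent a := by
  ext x
  exact ⟨fun (h : mk a < mk x) => ⟨lt_of_mk_lt_mk hIio hIoi h, coe_eq_coe'.not.1 h.ne'⟩,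
    fun h => mk_lt_mk_of_lt hIio hIoi (Ne.symm (coe_eq_coe'.not.2 h.2)) h.1⟩

theorem isOpen_Iio (hIio : ∀ a : X, IsOpen (Iio a))
    (hIoi : ∀ a : X, IsOpen (Ioi a)) (A : ConnectedComponents X) : IsOpen (Iio A) := by
  obtain ⟨a, rfl⟩ := surjective_coe A
  rw [← isQuotientMap_coe.isOpen_preimage, preimage_mk_Iio hIio hIoi]
  exact (hIio a).sdiff isClosed_connectedComponent

theorem isOpen_Ioi (hIio : ∀ a : X, IsOpen (Iio a))
    (hIoi : ∀ a : X, IsOpen (Ioi a)) (A : ConnectedComponents X) : IsOpen (Ioi A) := by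
  obtain ⟨a, rfl⟩ := surjective_coe A
  rw [← isQuotientMap_coe.isOpen_preimage, preimage_mk_Ioi hIio hIoi]
  exact (hIoi a).sdiff isClosed_connectedComponent

theorem _root_.Set.OrdConnected.image_mk (hIio : ∀ a : X, IsOpen (Iio a))
    (hIoi : ∀ a : X, IsOpen (Ioi a)) {V : Set X} (hV : V.OrdConnected) :
    (mk '' V).OrdConnected := by
  refine ⟨?_⟩
  rintro _ ⟨b, hb, rfl⟩ _ ⟨c, hc, rfl⟩ D ⟨hbD, hDc⟩
  obtain ⟨d, rfl⟩ := surjective_coe D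
  rcases hbD.eq_or_lt with hbd | hbd
  · exact ⟨b, hb, hbd⟩
  rcases hDc.eq_or_lt with hdc | hdc
  · exact ⟨c, hc, hdc.symm⟩
  exact ⟨d, hV.out hb hc
    ⟨(lt_of_mk_lt_mk hIio hIoi hbd).le, (lt_of_mk_lt_mk hIio hIoi hdc).le⟩, rfl⟩

theorem isOpen_ordConnectedComponent (hIio : ∀ a : X, IsOpen (Iio a))
    (hIoi : ∀ a : X, IsOpen (Ioi a))
    (hbase : ∀ (x : X) (U : Set X), IsOpen U → x ∈ U →
      ∃ V : Set X, IsOpen V ∧ x ∈ V ∧ V ⊆ U ∧ V.OrdConnected)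
    {U : Set (ConnectedComponents X)} (hU : IsOpen U) (A : ConnectedComponents X) :
    IsOpen (ordConnectedComponent U A) := by
  rw [← isQuotientMap_coe.isOpen_preimage, isOpen_iff_forall_mem_open]
  intro x hx
  obtain ⟨V, hVo, hxV, hVU, hV⟩ :=
    hbase x _ (hU.preimage continuous_coe) (ordConnectedComponent_subset (s := U) hx)
  refine ⟨V, fun y hy => ?_, hVo, hxV⟩
  rw [mem_preimage, ordConnectedComponent_eq hx]
  exact ((hV.image_mk hIio hIoi).uIcc_subset (mem_image_of_mem _ hxV)
    (mem_image_of_mem _ hy)).trans (image_subset_iff.2 hVU)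

end ConnectedComponents

attribute [local instance] ConnectedComponents.linearOrder

theorem stmt7_general {X : Type*} [LinearOrder X] [TopologicalSpace X]
    (hIio : ∀ a : X, IsOpen (Set.Iio a)) (hIoi : ∀ a : X, IsOpen (Set.Ioi a))
    (hbase : ∀ (x : X) (U : Set X), IsOpen U → x ∈ U →
      ∃ V : Set X, IsOpen V ∧ x ∈ V ∧ V ⊆ U ∧ V.OrdConnected) :
    ∃ l : LinearOrder (ConnectedComponents X),
      (∀ x y : X, ConnectedComponents.mk x ≠ ConnectedComponents.mk y →
        (l.lt (ConnectedComponents.mk x) (ConnectedComponents.mk y) ↔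
          ∀ c ∈ connectedComponent x, ∀ s ∈ connectedComponent y, c < s)) ∧
      (∀ A : ConnectedComponents X, IsOpen {B | l.lt B A}) ∧
      (∀ A : ConnectedComponents X, IsOpen {B | l.lt A B}) ∧
      (∀ (A : ConnectedComponents X) (U : Set (ConnectedComponents X)),
        IsOpen U → A ∈ U →
          ∃ V : Set (ConnectedComponents X), IsOpen V ∧ A ∈ V ∧ V ⊆ U ∧
            ∀ B ∈ V, ∀ C ∈ V, ∀ D, l.le B D → l.le D C → D ∈ V) := by
  refine ⟨ConnectedComponents.linearOrder, fun x y => ConnectedComponents.mk_lt_mk_iff hIio hIoi,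
    ConnectedComponents.isOpen_Iio hIio hIoi, ConnectedComponents.isOpen_Ioi hIio hIoi,
    fun A U hU hA => ⟨ordConnectedComponent U A, ?_, self_mem_ordConnectedComponent.2 hA,
      ordConnectedComponent_subset, fun B hB C hC D hBD hDC =>
        Set.Icc_subset _ hB hC ⟨hBD, hDC⟩⟩⟩
  exact ConnectedComponents.isOpen_ordConnectedComponent hIio hIoi hbase hU A

/-- Corollary 3.3: for a suborderable space `(X, ≤)` with compatible linear
order `≤`, the order induced on the set of connected components (declaring
`C < S` iff `c < s` for all `c ∈ C`, `s ∈ S`, for distinct components) is a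
linear order with respect to which the quotient space of components is
suborderable: the induced open rays are open in the quotient topology, and the
quotient has a base of sets convex for the induced order. -/
theorem stmt7 {X : Type*} [LinearOrder X] [TopologicalSpace X] [T2Space X]
    (hIio : ∀ a : X, IsOpen (Set.Iio a)) (hIoi : ∀ a : X, IsOpen (Set.Ioi a))
    (hbase : ∀ (x : X) (U : Set X), IsOpen U → x ∈ U →
      ∃ V : Set X, IsOpen V ∧ x ∈ V ∧ V ⊆ U ∧ V.OrdConnected) :
    ∃ l : LinearOrder (ConnectedComponents X),
      (∀ x y : X, ConnectedComponents.mk x ≠ ConnectedComponents.mk y →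
        (l.lt (ConnectedComponents.mk x) (ConnectedComponents.mk y) ↔
          ∀ c ∈ connectedComponent x, ∀ s ∈ connectedComponent y, c < s)) ∧
      (∀ A : ConnectedComponents X, IsOpen {B | l.lt B A}) ∧
      (∀ A : ConnectedComponents X, IsOpen {B | l.lt A B}) ∧
      (∀ (A : ConnectedComponents X) (U : Set (ConnectedComponents X)),
        IsOpen U → A ∈ U →
          ∃ V : Set (ConnectedComponents X), IsOpen V ∧ A ∈ V ∧ V ⊆ U ∧
            ∀ B ∈ V, ∀ C ∈ V, ∀ D, l.le B D → l.le D C → D ∈ V) :=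
  stmt7_general hIio hIoi hbase
end

section
/- Every suborderable Hausdorff space X contains a closed subset Z ⊆ X such that Z ∩ C is a nonempty finite set for every connected component C of X. -/
open Topology

/-- A Hausdorff space is suborderable (Čech) if it admits a linear order whose
open-interval topology is coarser than its topology and which has a base of
order-convex open sets. -/
def Suborderable (X : Type*) [TopologicalSpace X] : Prop :=
  ∃ l : LinearOrder X,
    (∀ a : X, IsOpen {x | l.lt x a}) ∧ (∀ a : X, IsOpen {x | l.lt a x}) ∧
    (∀ (x : X) (U : Set X), IsOpen U → x ∈ U →
      ∃ V : Set X, IsOpen V ∧ x ∈ V ∧ V ⊆ U ∧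
        ∀ a ∈ V, ∀ b ∈ V, ∀ c : X, l.le a c → l.le c b → c ∈ V)

/-- A space is strongly zero-dimensional (covering dimension `≤ 0`): every
finite open cover has a finite refinement by pairwise disjoint open sets. -/
def StronglyZeroDimensional (X : Type*) [TopologicalSpace X] : Prop :=
  ∀ 𝒰 : Set (Set X), 𝒰.Finite → (∀ U ∈ 𝒰, IsOpen U) → ⋃₀ 𝒰 = Set.univ →
    ∃ 𝒱 : Set (Set X), 𝒱.Finite ∧ (∀ V ∈ 𝒱, IsOpen V) ∧ ⋃₀ 𝒱 = Set.univ ∧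
      (∀ V ∈ 𝒱, ∃ U ∈ 𝒰, V ⊆ U) ∧
      ∀ V ∈ 𝒱, ∀ W ∈ 𝒱, V ≠ W → V ∩ W = ∅

/-! Pick one point in every connected component and let `Z` be the closure of the chosen
points. A component `C` is order-convex, so every chosen point outside `C` is a lower or an
upper bound of `C`; the closed sets of lower and upper bounds meet `C` in at most its least and
greatest element. Hence `Z ∩ C` consists of at most three points. -/

open Set

theorem orderClosedTopology_of_isOpen_Iio_Ioi {X : Type*} [TopologicalSpace X] [LinearOrder X]
    (hIio : ∀ a : X, IsOpen (Iio a)) (hIoi : ∀ a : X, IsOpen (Ioi a)) :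
    OrderClosedTopology X := by
  refine ⟨isOpen_compl_iff.1 <| isOpen_iff_forall_mem_open.2 fun p hp => ?_⟩
  obtain ⟨a, b⟩ := p
  replace hp : b < a := not_le.1 hp
  by_cases hgap : ∃ c, b < c ∧ c < a
  · obtain ⟨c, hbc, hca⟩ := hgap
    exact ⟨Ioi c ×ˢ Iio c, fun q hq => not_le.2 (hq.2.trans hq.1),
      (hIoi c).prod (hIio c), hca, hbc⟩
  · simp only [not_exists, not_and, not_lt] at hgap
    refine ⟨Ioi b ×ˢ Iio a, fun q hq => not_le.2 ?_, (hIoi b).prod (hIio a), hp, hp⟩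
    -- nothing lies strictly between `b` and `a`
    calc q.2 ≤ b := not_lt.1 fun hbq => (hgap q.2 hbq).not_gt hq.2
      _ < a := hp
      _ ≤ q.1 := hgap q.1 hq.1

theorem Set.OrdConnected.mem_lowerBounds_or_mem_upperBounds {X : Type*} [LinearOrder X]
    {s : Set X} (hs : s.OrdConnected) {x : X} (hx : x ∉ s) :
    x ∈ lowerBounds s ∨ x ∈ upperBounds s := by
  by_contra! h
  simp only [mem_lowerBounds, mem_upperBounds, not_forall, not_le, exists_prop] at h
  obtain ⟨⟨a, ha, hax⟩, ⟨b, hb, hxb⟩⟩ := h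
  exact hx (hs.out ha hb ⟨hax.le, hxb.le⟩)

theorem isClosed_lowerBounds {X : Type*} [TopologicalSpace X] [Preorder X] [ClosedIicTopology X]
    (s : Set X) : IsClosed (lowerBounds s) := by
  rw [show lowerBounds s = ⋂ a ∈ s, Iic a by ext; simp [mem_lowerBounds]]
  exact isClosed_biInter fun a _ => isClosed_Iic

theorem isClosed_upperBounds {X : Type*} [TopologicalSpace X] [Preorder X] [ClosedIciTopology X]
    (s : Set X) : IsClosed (upperBounds s) :=
  isClosed_lowerBounds (X := Xᵒᵈ) s

theorem Set.OrdConnected.finite_closure_inter {X : Type*} [TopologicalSpace X] [LinearOrder X]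
    [OrderClosedTopology X] {s T : Set X} (hs : s.OrdConnected) (hT : (T ∩ s).Finite) :
    (closure T ∩ s).Finite := by
  have hcover : T ⊆ (T ∩ s) ∪ (lowerBounds s ∪ upperBounds s) := fun t ht => by
    by_cases hts : t ∈ s
    · exact Or.inl ⟨ht, hts⟩
    · exact Or.inr (hs.mem_lowerBounds_or_mem_upperBounds hts)
  have hclosed : IsClosed ((T ∩ s) ∪ (lowerBounds s ∪ upperBounds s)) :=
    hT.isClosed.union ((isClosed_lowerBounds s).union (isClosed_upperBounds s))
  have hleast : (lowerBounds s ∩ s).Subsingleton := fun a ha b hb =>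
    (ha.1 hb.2).antisymm (hb.1 ha.2)
  have hgreatest : (upperBounds s ∩ s).Subsingleton := fun a ha b hb =>
    (hb.1 ha.2).antisymm (ha.1 hb.2)
  refine (hT.union (hleast.finite.union hgreatest.finite)).subset ?_
  rintro y ⟨hy, hys⟩
  rcases hclosed.closure_subset_iff.2 hcover hy with hyT | hyl | hyu
  · exact Or.inl hyT
  · exact Or.inr (Or.inl ⟨hyl, hys⟩)
  · exact Or.inr (Or.inr ⟨hyu, hys⟩)

theorem range_inter_connectedComponent_eq_singleton {X : Type*} [TopologicalSpace X]
    {σ : ConnectedComponents X → X} (hσ : ∀ q, ConnectedComponents.mk (σ q) = q) (x : X) :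
    range σ ∩ connectedComponent x = {σ (ConnectedComponents.mk x)} := by
  ext y
  refine ⟨?_, ?_⟩
  · rintro ⟨⟨q, rfl⟩, hq⟩
    rw [← ConnectedComponents.coe_eq_coe'.2 hq, hσ]
    rfl
  · rintro rfl
    exact ⟨mem_range_self _, ConnectedComponents.coe_eq_coe'.1 (hσ _)⟩

theorem stmt9_general {X : Type*} [TopologicalSpace X]
    (hX : Suborderable X) :
    ∃ Z : Set X, IsClosed Z ∧ ∀ x : X,
      (Z ∩ connectedComponent x).Nonempty ∧ (Z ∩ connectedComponent x).Finite := by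
  obtain ⟨l, hIio, hIoi, -⟩ := hX
  let := l
  have := orderClosedTopology_of_isOpen_Iio_Ioi hIio hIoi
  set σ := Function.surjInv ConnectedComponents.surjective_coe (α := X)
  have hσ : ∀ x : X, range σ ∩ connectedComponent x = {σ (ConnectedComponents.mk x)} :=
    range_inter_connectedComponent_eq_singleton (Function.surjInv_eq _)
  refine ⟨closure (range σ), isClosed_closure, fun x => ⟨?_, ?_⟩⟩
  · exact ((hσ x).symm ▸ singleton_nonempty _).mono (inter_subset_inter_left _ subset_closure)
  · exact isPreconnected_connectedComponent.ordConnected.finite_closure_inter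
      ((hσ x).symm ▸ finite_singleton _)

/-- Proposition 3.5: every suborderable Hausdorff space contains a closed set
meeting every connected component in a nonempty finite set. -/
theorem stmt9 {X : Type*} [TopologicalSpace X] [T2Space X]
    (hX : Suborderable X) :
    ∃ Z : Set X, IsClosed Z ∧ ∀ x : X,
      (Z ∩ connectedComponent x).Nonempty ∧ (Z ∩ connectedComponent x).Finite :=
  stmt9_general hX
end

section
/- Let (X,≤) be a metrizable suborderable Hausdorff space with compatible linear order ≤ and compatible convex metric ρ. If C is a connected component of X and U ⊆ X is an open set with C ⊆ U, then there exists ε > 0 such that Δ(C,ε) ⊆ U. -/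
open Topology

section MetricSuborderable

variable {X : Type*} [MetricSpace X] [LinearOrder X]

/-- `(←, C)`: the points lying strictly below every point of `C`. -/
def leftOf (C : Set X) : Set X := {x | ∀ c ∈ C, x < c}

/-- `(C, →)`: the points lying strictly above every point of `C`. -/
def rightOf (C : Set X) : Set X := {x | ∀ c ∈ C, c < x}

/-- `ℓ(C) = |cl((←, C)) ∩ C|`. -/
noncomputable def ell (C : Set X) : ℕ := (closure (leftOf C) ∩ C).ncard

/-- `r(C) = |C ∩ cl((C, →))|`. -/
noncomputable def rr (C : Set X) : ℕ := (C ∩ closure (rightOf C)).ncard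

/-- The open `δ`-neighbourhood `O(C, δ)` of a set `C`. -/
def ballAround (C : Set X) (δ : ℝ) : Set X := {x | ∃ c ∈ C, dist x c < δ}

/-- The neighbourhood `Δ(C, ε)` of a component `C`; note that
`(←, C] = (C, →)ᶜ` and `[C, →) = (←, C)ᶜ`. -/
noncomputable def Delta (C : Set X) (ε : ℝ) : Set X :=
  if ell C = 0 ∧ rr C = 0 then C
  else if ell C ≠ 0 ∧ rr C = 0 then ballAround C (ε / 2) ∩ (rightOf C)ᶜ
  else if ell C = 0 ∧ rr C ≠ 0 then ballAround C (ε / 2) ∩ (leftOf C)ᶜ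
  else ballAround C (ε / 2)

/-- `D[X]`: the clopen sets that are a connected component or meet infinitely
many connected components. -/
def DD (X : Type*) [TopologicalSpace X] : Set (Set X) :=
  {U | IsClopen U ∧ ((∃ x : X, U = connectedComponent x) ∨
    {C : Set X | ∃ x ∈ U, C = connectedComponent x}.Infinite)}

/-- `C_ε[U]`: the connected components of `U` of diameter at least `ε`. -/
noncomputable def compsGE (U : Set X) (ε : ℝ) : Set (Set X) :=
  {C | (∃ x ∈ U, C = connectedComponentIn U x) ∧
    ENNReal.ofReal ε ≤ EMetric.diam C}

/-- `D[X, ε]`: the members of `D[X]` of diameter `< ε`, or contained in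
`Δ(C, ε)` for some component `C ∈ C_ε[U]`. -/
noncomputable def DXeps (X : Type*) [MetricSpace X] [LinearOrder X] (ε : ℝ) :
    Set (Set X) :=
  {U | U ∈ DD X ∧ (EMetric.diam U < ENNReal.ofReal ε ∨
    ∃ C ∈ compsGE U ε, U ⊆ Delta C ε)}

/-- `κ[C]`: the least `n` with `diam C ≥ 2^(-n)`. -/
noncomputable def kappa (C : Set X) : ℕ :=
  sInf {n : ℕ | ENNReal.ofReal ((2 : ℝ) ^ (-(n : ℤ))) ≤ EMetric.diam C}

/-- `A < B` pointwise for subsets of a linear order. -/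
def setBelow (A B : Set X) : Prop := ∀ a ∈ A, ∀ b ∈ B, a < b

end MetricSuborderable

/-!
A component `C` of a suborderable space is order-convex, so every point near `C` but outside it
lies in `(←, C)` or in `(C, →)`. If, say, `ℓ(C) ≠ 0`, pick `p ∈ C ∩ cl((←, C))`, a convex open
`V ∋ p` inside `U`, and a point `q ∈ V ∩ (←, C)` with a ball `B(q, δ) ⊆ V`. A point `x < C` with
`ρ(x, C) < δ` lies either in `[q, p] ⊆ V` or below `q`, and in the latter case convexity of `ρ`
gives `ρ(x, q) ≤ ρ(x, c) < δ`. Hence `Δ(C, 2δ) ⊆ U` on that side, and `ε` is twice the smaller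
of the two sides' `δ`.
-/

open Set

theorem IsPreconnected.ordConnected_of_isOpen_Iio_Ioi {X : Type*} [TopologicalSpace X]
    [LinearOrder X] (hIio : ∀ a : X, IsOpen (Iio a))
    (hIoi : ∀ a : X, IsOpen (Ioi a)) {s : Set X} (hs : IsPreconnected s) : s.OrdConnected := by
  refine ⟨fun a ha b hb x hx => ?_⟩
  by_contra hxs
  have hax : a < x := lt_of_le_of_ne hx.1 (ne_of_mem_of_not_mem ha hxs)
  have hxb : x < b := lt_of_le_of_ne hx.2 (ne_of_mem_of_not_mem hb hxs).symm
  have hcover : s ⊆ Iio x ∪ Ioi x := fun y hy => lt_or_gt_of_ne (ne_of_mem_of_not_mem hy hxs)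
  obtain ⟨y, -, hyx, hxy⟩ := hs _ _ (hIio x) (hIoi x) hcover ⟨a, ha, hax⟩ ⟨b, hb, hxb⟩
  exact lt_asymm hyx hxy

theorem Set.OrdConnected.mem_leftOf_or_mem_rightOf {X : Type*} [LinearOrder X] {C : Set X}
    (hC : C.OrdConnected) {x : X} (hx : x ∉ C) : x ∈ leftOf C ∨ x ∈ rightOf C := by
  by_contra! h
  simp only [leftOf, rightOf, mem_ofPred_eq, not_forall, not_lt, exists_prop] at h
  obtain ⟨⟨c, hc, hcx⟩, ⟨c', hc', hxc'⟩⟩ := h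
  exact hx (hC.out hc hc' ⟨hcx, hxc'⟩)

theorem ballAround_mono {X : Type*} [MetricSpace X] (C : Set X) {δ δ' : ℝ} (h : δ ≤ δ') :
    ballAround C δ ⊆ ballAround C δ' :=
  fun _ ⟨c, hc, hxc⟩ => ⟨c, hc, hxc.trans_le h⟩

section MetricSuborderable

variable {X : Type*} [MetricSpace X] [LinearOrder X]

theorem exists_leftOf_inter_ballAround_subset
    (hconv : ∀ x a b y : X, x ≤ a → a ≤ b → b ≤ y → dist a b ≤ dist x y)
    (hbase : ∀ (x : X) (U : Set X), IsOpen U → x ∈ U →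
      ∃ V : Set X, IsOpen V ∧ x ∈ V ∧ V ⊆ U ∧ V.OrdConnected)
    {C U : Set X} (hU : IsOpen U) (hCU : C ⊆ U) (hℓ : ell C ≠ 0) :
    ∃ δ > 0, leftOf C ∩ ballAround C δ ⊆ U := by
  obtain ⟨p, hpcl, hpC⟩ := nonempty_of_ncard_ne_zero hℓ
  obtain ⟨V, hVo, hpV, hVU, hV⟩ := hbase p U hU (hCU hpC)
  obtain ⟨q, hqV, hqC⟩ := mem_closure_iff.mp hpcl V hVo hpV
  obtain ⟨δ, hδ, hball⟩ := Metric.isOpen_iff.mp hVo q hqV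
  refine ⟨δ, hδ, fun x ⟨hxC, c, hc, hxc⟩ => hVU ?_⟩
  rcases le_or_gt q x with hqx | hxq
  · exact hV.out hqV hpV ⟨hqx, (hxC p hpC).le⟩
  · exact hball ((hconv x x q c le_rfl hxq.le (hqC c hc).le).trans_lt hxc)

theorem exists_rightOf_inter_ballAround_subset
    (hconv : ∀ x a b y : X, x ≤ a → a ≤ b → b ≤ y → dist a b ≤ dist x y)
    (hbase : ∀ (x : X) (U : Set X), IsOpen U → x ∈ U →
      ∃ V : Set X, IsOpen V ∧ x ∈ V ∧ V ⊆ U ∧ V.OrdConnected)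
    {C U : Set X} (hU : IsOpen U) (hCU : C ⊆ U) (hr : rr C ≠ 0) :
    ∃ δ > 0, rightOf C ∩ ballAround C δ ⊆ U := by
  obtain ⟨p, hpC, hpcl⟩ := nonempty_of_ncard_ne_zero hr
  obtain ⟨V, hVo, hpV, hVU, hV⟩ := hbase p U hU (hCU hpC)
  obtain ⟨q, hqV, hqC⟩ := mem_closure_iff.mp hpcl V hVo hpV
  obtain ⟨δ, hδ, hball⟩ := Metric.isOpen_iff.mp hVo q hqV
  refine ⟨δ, hδ, fun x ⟨hxC, c, hc, hxc⟩ => hVU ?_⟩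
  rcases le_or_gt x q with hxq | hqx
  · exact hV.out hpV hqV ⟨(hxC p hpC).le, hxq⟩
  · refine hball ?_
    rw [Metric.mem_ball, dist_comm]
    rw [dist_comm] at hxc
    exact (hconv c q x x (hqC c hc).le hqx.le le_rfl).trans_lt hxc

theorem Set.OrdConnected.mem_of_mem_Delta {C : Set X} (hC : C.OrdConnected) {ε : ℝ} {x : X}
    (hx : x ∈ Delta C ε) :
    x ∈ C ∨ (ell C ≠ 0 ∧ x ∈ leftOf C ∩ ballAround C (ε / 2)) ∨
      (rr C ≠ 0 ∧ x ∈ rightOf C ∩ ballAround C (ε / 2)) := by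
  by_cases hxC : x ∈ C
  · exact Or.inl hxC
  have hside := hC.mem_leftOf_or_mem_rightOf hxC
  unfold Delta at hx
  split_ifs at hx with h₀ h₁ h₂
  · exact Or.inl hx
  · exact Or.inr (Or.inl ⟨h₁.1, hside.resolve_right hx.2, hx.1⟩)
  · exact Or.inr (Or.inr ⟨h₂.2, hside.resolve_left hx.2, hx.1⟩)
  · have hℓ : ell C ≠ 0 := by tauto
    have hr : rr C ≠ 0 := by tauto
    rcases hside with hl | hr'
    · exact Or.inr (Or.inl ⟨hℓ, hl, hx⟩)
    · exact Or.inr (Or.inr ⟨hr, hr', hx⟩)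

end MetricSuborderable

/-- Proposition 4.1: in a metrizable suborderable space `(X, ≤)` with
compatible convex metric, every open set `U` containing a connected component
`C` contains `Δ(C, ε)` for some `ε > 0`. -/
theorem stmt11 {X : Type*} [MetricSpace X] [LinearOrder X]
    (hconv : ∀ x a b y : X, x ≤ a → a ≤ b → b ≤ y → dist a b ≤ dist x y)
    (hIio : ∀ a : X, IsOpen (Set.Iio a)) (hIoi : ∀ a : X, IsOpen (Set.Ioi a))
    (hbase : ∀ (x : X) (U : Set X), IsOpen U → x ∈ U →
      ∃ V : Set X, IsOpen V ∧ x ∈ V ∧ V ⊆ U ∧ V.OrdConnected)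
    (x₀ : X) (U : Set X) (hU : IsOpen U) (hCU : connectedComponent x₀ ⊆ U) :
    ∃ ε > (0 : ℝ), Delta (connectedComponent x₀) ε ⊆ U := by
  set C := connectedComponent x₀
  have hC : C.OrdConnected :=
    isPreconnected_connectedComponent.ordConnected_of_isOpen_Iio_Ioi hIio hIoi
  obtain ⟨δl, hδl, hl⟩ : ∃ δ > (0 : ℝ), ell C ≠ 0 → leftOf C ∩ ballAround C δ ⊆ U := by
    by_cases h : ell C = 0
    · exact ⟨1, one_pos, absurd h⟩
    · obtain ⟨δ, hδ, hδU⟩ := exists_leftOf_inter_ballAround_subset hconv hbase hU hCU h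
      exact ⟨δ, hδ, fun _ => hδU⟩
  obtain ⟨δr, hδr, hr⟩ : ∃ δ > (0 : ℝ), rr C ≠ 0 → rightOf C ∩ ballAround C δ ⊆ U := by
    by_cases h : rr C = 0
    · exact ⟨1, one_pos, absurd h⟩
    · obtain ⟨δ, hδ, hδU⟩ := exists_rightOf_inter_ballAround_subset hconv hbase hU hCU h
      exact ⟨δ, hδ, fun _ => hδU⟩
  refine ⟨2 * min δl δr, by positivity, fun x hx => ?_⟩
  have hx' := hC.mem_of_mem_Delta hx
  rw [mul_div_cancel_left₀ _ two_ne_zero] at hx'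
  rcases hx' with hxC | ⟨hℓ, hxl, hxb⟩ | ⟨hρ, hxr, hxb⟩
  · exact hCU hxC
  · exact hl hℓ ⟨hxl, ballAround_mono C (min_le_left _ _) hxb⟩
  · exact hr hρ ⟨hxr, ballAround_mono C (min_le_right _ _) hxb⟩
end
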